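/- Let λ, t, μ > 0 and λ̃ ≥ 0. Let ω, ω_h : ℝ² → ℝ and φ, φ_h, ρ : ℝ² → ℝ² be smooth and compactly supported, and set γ = λ t⁻² (∇ω − φ) and γ_h = λ t⁻² (∇ω_h − ρ). Then λ⁻² t⁴ ∫ ( rot(γ − γ_h) )² dx ≤ (2/μ) ∫ ( 2μ ‖ε(φ − φ_h)‖_F² + λ̃ (tr ε(φ − φ_h))² ) dx + 2 ∫ ( rot(φ_h − ρ) )² dx. -/

import Mathlib

open MeasureTheory Matrix

/-- Jacobian matrix of a map `v : ℝ² → ℝ²` at a point: `(jac v p) i j = ∂ⱼ vᵢ (p)`. -/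
noncomputable def jac (v : (Fin 2 → ℝ) → (Fin 2 → ℝ)) (p : Fin 2 → ℝ) :
    Matrix (Fin 2) (Fin 2) ℝ :=
  fun i j => fderiv ℝ v p (Pi.single j 1) i

/-- Symmetric gradient `ε(v) = (Dv + (Dv)ᵀ)/2`. -/
noncomputable def epsl (v : (Fin 2 → ℝ) → (Fin 2 → ℝ)) (p : Fin 2 → ℝ) :
    Matrix (Fin 2) (Fin 2) ℝ :=
  (1 / 2 : ℝ) • (jac v p + (jac v p)ᵀ)

/-- Squared Frobenius norm of a 2×2 matrix. -/
def frobSq (A : Matrix (Fin 2) (Fin 2) ℝ) : ℝ := ∑ i, ∑ j, (A i j) ^ 2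

/-- Frobenius inner product of 2×2 matrices. -/
def frobInner (A B : Matrix (Fin 2) (Fin 2) ℝ) : ℝ := ∑ i, ∑ j, A i j * B i j

/-- Divergence `div v = tr (Dv)`. -/
noncomputable def divg (v : (Fin 2 → ℝ) → (Fin 2 → ℝ)) (p : Fin 2 → ℝ) : ℝ :=
  Matrix.trace (jac v p)

/-- Scalar rotation `rot v = ∂₁v₂ − ∂₂v₁`. -/
noncomputable def rotv (v : (Fin 2 → ℝ) → (Fin 2 → ℝ)) (p : Fin 2 → ℝ) : ℝ :=
  jac v p 1 0 - jac v p 0 1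

/-- Gradient of a scalar function as a vector field on `ℝ²`. -/
noncomputable def gradF (f : (Fin 2 → ℝ) → ℝ) (p : Fin 2 → ℝ) : Fin 2 → ℝ :=
  fun i => fderiv ℝ f p (Pi.single i 1)

noncomputable def pd (j : Fin 2) (f : (Fin 2 → ℝ) → ℝ) (p : Fin 2 → ℝ) : ℝ :=
  fderiv ℝ f p (Pi.single j 1)

lemma contDiff_pd {f : (Fin 2 → ℝ) → ℝ} (hf : ContDiff ℝ (⊤ : ℕ∞) f) (j : Fin 2) :
    ContDiff ℝ (⊤ : ℕ∞) (pd j f) :=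
  (hf.fderiv_right (by simp)).clm_apply contDiff_const

lemma hcs_pd {f : (Fin 2 → ℝ) → ℝ} (hfs : HasCompactSupport f) (j : Fin 2) :
    HasCompactSupport (pd j f) :=
  (hfs.fderiv ℝ).comp_left (g := fun L : (Fin 2 → ℝ) →L[ℝ] ℝ => L (Pi.single j 1)) rfl

lemma pd_comm {f : (Fin 2 → ℝ) → ℝ} (hf : ContDiff ℝ (⊤ : ℕ∞) f) (i j : Fin 2) (p : Fin 2 → ℝ) :
    pd i (pd j f) p = pd j (pd i f) p := by
  have hdiff : DifferentiableAt ℝ (fderiv ℝ f) p :=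
    ((hf.fderiv_right (m := (⊤ : ℕ∞)) (by simp)).differentiable (by simp)) p
  have key : ∀ u w : Fin 2 → ℝ,
      fderiv ℝ (fun q => fderiv ℝ f q u) p w = fderiv ℝ (fderiv ℝ f) p w u := by
    intro u w
    rw [fderiv_clm_apply hdiff (differentiableAt_const u)]
    simp
  have hsymm : IsSymmSndFDerivAt ℝ f p :=
    hf.contDiffAt.isSymmSndFDerivAt (by rw [minSmoothness_of_isRCLikeNormedField]; exact (WithTop.coe_le_coe.mpr le_top : ((2 : ℕ∞) : WithTop ℕ∞) ≤ ((⊤ : ℕ∞) : WithTop ℕ∞)))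
  show fderiv ℝ (fun q => fderiv ℝ f q (Pi.single j 1)) p (Pi.single i 1)
      = fderiv ℝ (fun q => fderiv ℝ f q (Pi.single i 1)) p (Pi.single j 1)
  rw [key, key, hsymm]



lemma jac_apply {v : (Fin 2 → ℝ) → (Fin 2 → ℝ)} (hv : Differentiable ℝ v)
    (p : Fin 2 → ℝ) (i j : Fin 2) :
    jac v p i j = pd j (fun q => v q i) p := by
  have h := ((ContinuousLinearMap.proj (R := ℝ) (φ := fun _ : Fin 2 => ℝ) i).hasFDerivAt.comp
    p (hv p).hasFDerivAt).fderiv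
  show fderiv ℝ v p (Pi.single j 1) i = fderiv ℝ (fun q => v q i) p (Pi.single j 1)
  have : (fun q => v q i) = (ContinuousLinearMap.proj (R := ℝ) (φ := fun _ : Fin 2 => ℝ) i) ∘ v := rfl
  rw [this, h]
  rfl

lemma jac_gradF {f : (Fin 2 → ℝ) → ℝ} (hf : ContDiff ℝ (⊤ : ℕ∞) f) (p : Fin 2 → ℝ) (i j : Fin 2) :
    jac (gradF f) p i j = pd j (pd i f) p := by
  have h : gradF f = fun q => fun k => pd k f q := rfl
  show fderiv ℝ (gradF f) p (Pi.single j 1) i = pd j (pd i f) p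
  rw [h, fderiv_pi (fun k => ((contDiff_pd hf k).differentiable (by simp)) p)]
  rfl


lemma contDiff_comp {v : (Fin 2 → ℝ) → (Fin 2 → ℝ)} (hv : ContDiff ℝ (⊤ : ℕ∞) v) (i : Fin 2) :
    ContDiff ℝ (⊤ : ℕ∞) (fun q => v q i) :=
  (ContinuousLinearMap.proj (R := ℝ) (φ := fun _ : Fin 2 => ℝ) i).contDiff.comp hv

lemma hcs_comp {v : (Fin 2 → ℝ) → (Fin 2 → ℝ)} (hvs : HasCompactSupport v) (i : Fin 2) :
    HasCompactSupport (fun q => v q i) :=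
  hvs.comp_left (g := fun y : Fin 2 → ℝ => y i) rfl

lemma rotv_zero_gradF {f : (Fin 2 → ℝ) → ℝ} (hf : ContDiff ℝ (⊤ : ℕ∞) f) (p : Fin 2 → ℝ) :
    rotv (gradF f) p = 0 := by
  rw [rotv, jac_gradF hf, jac_gradF hf, pd_comm hf]
  ring

lemma rotv_sub {u w : (Fin 2 → ℝ) → (Fin 2 → ℝ)} (hu : Differentiable ℝ u)
    (hw : Differentiable ℝ w) (p : Fin 2 → ℝ) :
    rotv (fun q => u q - w q) p = rotv u p - rotv w p := by
  simp only [rotv, jac, fderiv_fun_sub (hu p) (hw p)]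
  simp
  ring

lemma rotv_smul {u : (Fin 2 → ℝ) → (Fin 2 → ℝ)} (hu : Differentiable ℝ u) (c : ℝ)
    (p : Fin 2 → ℝ) :
    rotv (fun q => c • u q) p = c * rotv u p := by
  simp only [rotv, jac, fderiv_fun_const_smul (hu p) c]
  simp
  ring

lemma integrable_mul {f g : (Fin 2 → ℝ) → ℝ} (hf : ContDiff ℝ (⊤ : ℕ∞) f) (hg : ContDiff ℝ (⊤ : ℕ∞) g)
    (hgs : HasCompactSupport g) : Integrable (fun p => f p * g p) := by
  exact (hf.continuous.mul hg.continuous).integrable_of_hasCompactSupport hgs.mul_left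

lemma ibp {f g : (Fin 2 → ℝ) → ℝ} (hf : ContDiff ℝ (⊤ : ℕ∞) f) (hg : ContDiff ℝ (⊤ : ℕ∞) g)
    (hfs : HasCompactSupport f) (hgs : HasCompactSupport g) (j : Fin 2) :
    ∫ p, f p * pd j g p = - ∫ p, pd j f p * g p := by
  exact integral_mul_fderiv_eq_neg_fderiv_mul_of_integrable
    (integrable_mul (contDiff_pd hf j) hg hgs)
    (integrable_mul hf (contDiff_pd hg j) (hcs_pd hgs j))
    (integrable_mul hf hg hgs)
    (fun x _ => hf.differentiable (by simp) x) (fun x _ => hg.differentiable (by simp) x)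

lemma swap_int {f g : (Fin 2 → ℝ) → ℝ} (hf : ContDiff ℝ (⊤ : ℕ∞) f) (hg : ContDiff ℝ (⊤ : ℕ∞) g)
    (hfs : HasCompactSupport f) (hgs : HasCompactSupport g) (i j : Fin 2) :
    ∫ p, pd i f p * pd j g p = ∫ p, pd j f p * pd i g p := by
  rw [ibp (contDiff_pd hf i) hg (hcs_pd hfs i) hgs j,
      ibp (contDiff_pd hf j) hg (hcs_pd hfs j) hgs i]
  congr 1
  apply integral_congr_ae
  filter_upwards with p
  rw [pd_comm hf i j]



lemma integrable_sq {h : (Fin 2 → ℝ) → ℝ} (hc : Continuous h) (hs : HasCompactSupport h) :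
    Integrable (fun p => (h p)^2) :=
  (hc.pow 2).integrable_of_hasCompactSupport (hs.comp_left (g := fun y : ℝ => y^2) (by norm_num) :)

lemma korn {v : (Fin 2 → ℝ) → (Fin 2 → ℝ)} (hv : ContDiff ℝ (⊤ : ℕ∞) v)
    (hvs : HasCompactSupport v) :
    ∫ p, (rotv v p)^2 ≤ 2 * ∫ p, frobSq (epsl v p) := by
  set f0 : (Fin 2 → ℝ) → ℝ := fun q => v q 0 with hf0
  set f1 : (Fin 2 → ℝ) → ℝ := fun q => v q 1 with hf1
  have hd := hv.differentiable (by simp)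
  have hcf0 : ContDiff ℝ (⊤ : ℕ∞) f0 := contDiff_comp hv 0
  have hcf1 : ContDiff ℝ (⊤ : ℕ∞) f1 := contDiff_comp hv 1
  have hsf0 : HasCompactSupport f0 := hcs_comp hvs 0
  have hsf1 : HasCompactSupport f1 := hcs_comp hvs 1
  set a := pd 0 f0
  set b := pd 1 f1
  set c := pd 1 f0
  set d := pd 0 f1
  have hca : Continuous a := (contDiff_pd hcf0 0).continuous
  have hcb : Continuous b := (contDiff_pd hcf1 1).continuous
  have hcc : Continuous c := (contDiff_pd hcf0 1).continuous
  have hcd : Continuous d := (contDiff_pd hcf1 0).continuous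
  have hsa : HasCompactSupport a := hcs_pd hsf0 0
  have hsb : HasCompactSupport b := hcs_pd hsf1 1
  have hsc : HasCompactSupport c := hcs_pd hsf0 1
  have hsd : HasCompactSupport d := hcs_pd hsf1 0
  have hrot : ∀ p, rotv v p = d p - c p := by
    intro p
    rw [rotv, jac_apply hd, jac_apply hd]
  have hfrob : ∀ p, frobSq (epsl v p) =
      ((rotv v p)^2 + 2*(a p + b p)^2 + 4*(c p * d p) - 4*(a p * b p))/2 := by
    intro p
    rw [hrot p]
    simp only [frobSq, epsl, Fin.sum_univ_two, Matrix.smul_apply, Matrix.add_apply,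
      Matrix.transpose_apply, jac_apply hd, smul_eq_mul]
    show _ = ((d p - c p)^2 + 2*(a p + b p)^2 + 4*(c p * d p) - 4*(a p * b p))/2
    ring
  have key : ∫ p, c p * d p = ∫ p, a p * b p := by
    have := swap_int hcf0 hcf1 hsf0 hsf1 1 0
    rw [this]
  have hint_rot : Integrable (fun p => (rotv v p)^2) := by
    have : Integrable (fun p => (d p - c p)^2) :=
      integrable_sq (hcd.sub hcc) (hsd.comp₂_left hsc (sub_zero 0))
    exact this.congr (by filter_upwards with p; rw [hrot p])
  have hint_ab2 : Integrable (fun p => (a p + b p)^2) :=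
    integrable_sq (hca.add hcb) (hsa.add hsb)
  have hint_cd : Integrable (fun p => c p * d p) := integrable_mul (contDiff_pd hcf0 1)
    (contDiff_pd hcf1 0) hsd
  have hint_ab : Integrable (fun p => a p * b p) := integrable_mul (contDiff_pd hcf0 0)
    (contDiff_pd hcf1 1) hsb
  have hsplit : ∫ p, frobSq (epsl v p) =
      ((∫ p, (rotv v p)^2) + 2*(∫ p, (a p + b p)^2) + 4*(∫ p, c p * d p)
        - 4*(∫ p, a p * b p))/2 := by
    have step1 : ∫ p, frobSq (epsl v p) =
        ∫ p, ((rotv v p)^2 + 2*(a p + b p)^2 + 4*(c p * d p) - 4*(a p * b p))/2 :=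
      integral_congr_ae (by filter_upwards with p; rw [hfrob p])
    have i2 : Integrable (fun p => 2*(a p + b p)^2) := hint_ab2.const_mul 2
    have i3 : Integrable (fun p => 4*(c p * d p)) := hint_cd.const_mul 4
    have i4 : Integrable (fun p => 4*(a p * b p)) := hint_ab.const_mul 4
    have i12 : Integrable (fun p => (rotv v p)^2 + 2*(a p + b p)^2) := hint_rot.add i2
    have i123 : Integrable (fun p => (rotv v p)^2 + 2*(a p + b p)^2 + 4*(c p * d p)) :=
      i12.add i3
    rw [step1, integral_div, integral_sub i123 i4, integral_add i12 i3,
        integral_add hint_rot i2, integral_const_mul, integral_const_mul, integral_const_mul]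
  rw [hsplit, key]
  have hnn : 0 ≤ ∫ p, (a p + b p)^2 := integral_nonneg fun p => sq_nonneg _
  linarith

lemma contDiff_gradF {f : (Fin 2 → ℝ) → ℝ} (hf : ContDiff ℝ (⊤ : ℕ∞) f) :
    ContDiff ℝ (⊤ : ℕ∞) (gradF f) :=
  contDiff_pi.mpr (fun i => contDiff_pd hf i)

/-- The estimate `λ⁻²t⁴‖rot(γ − γ_h)‖² ≤ (2/μ)‖φ − φ_h‖_C² + 2‖rot(φ_h − ρ)‖²`
from the proof of Theorem 4.1, with `γ = λt⁻²(∇ω − φ)`, `γ_h = λt⁻²(∇ω_h − ρ)`. -/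
theorem stmt15 (lam t μ lamt : ℝ)
    (hlam : 0 < lam) (ht : 0 < t) (hμ : 0 < μ) (hlamt : 0 ≤ lamt)
    (ω ωh : (Fin 2 → ℝ) → ℝ) (φ φh ρ : (Fin 2 → ℝ) → (Fin 2 → ℝ))
    (hω : ContDiff ℝ (⊤ : ℕ∞) ω) (hωh : ContDiff ℝ (⊤ : ℕ∞) ωh)
    (hφ : ContDiff ℝ (⊤ : ℕ∞) φ) (hφh : ContDiff ℝ (⊤ : ℕ∞) φh) (hρ : ContDiff ℝ (⊤ : ℕ∞) ρ)
    (hωs : HasCompactSupport ω) (hωhs : HasCompactSupport ωh)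
    (hφs : HasCompactSupport φ) (hφhs : HasCompactSupport φh)
    (hρs : HasCompactSupport ρ)
    (γ γh : (Fin 2 → ℝ) → (Fin 2 → ℝ))
    (hγ : γ = fun p => (lam * (t ^ 2)⁻¹) • (gradF ω p - φ p))
    (hγh : γh = fun p => (lam * (t ^ 2)⁻¹) • (gradF ωh p - ρ p)) :
    (lam ^ 2)⁻¹ * t ^ 4 * ∫ p, (rotv (fun q => γ q - γh q) p) ^ 2 ≤
      (2 / μ) * (∫ p, (2 * μ * frobSq (epsl (fun q => φ q - φh q) p) +
          lamt * (Matrix.trace (epsl (fun q => φ q - φh q) p)) ^ 2)) +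
        2 * ∫ p, (rotv (fun q => φh q - ρ q) p) ^ 2 := by
  set c := lam * (t ^ 2)⁻¹ with hc
  set v : (Fin 2 → ℝ) → (Fin 2 → ℝ) := fun q => φ q - φh q with hvdef
  set A : (Fin 2 → ℝ) → ℝ := fun p => rotv v p with hA
  set B : (Fin 2 → ℝ) → ℝ := fun p => rotv (fun q => φh q - ρ q) p with hB
  -- regularity of v, A, B
  have hvc : ContDiff ℝ (⊤ : ℕ∞) v := hφ.sub hφh
  have hvs : HasCompactSupport v := hφs.comp₂_left hφhs (sub_zero 0)
  have hwc : ContDiff ℝ (⊤ : ℕ∞) (fun q => φh q - ρ q) := hφh.sub hρ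
  have hws : HasCompactSupport (fun q => φh q - ρ q) := hφhs.comp₂_left hρs (sub_zero 0)
  have rotv_eq_pd : ∀ (u : (Fin 2 → ℝ) → (Fin 2 → ℝ)), Differentiable ℝ u →
      (fun p => rotv u p) = fun p => pd 0 (fun q => u q 1) p - pd 1 (fun q => u q 0) p := by
    intro u hu
    funext p
    rw [rotv, jac_apply hu, jac_apply hu]
  have rot_reg : ∀ (u : (Fin 2 → ℝ) → (Fin 2 → ℝ)), ContDiff ℝ (⊤ : ℕ∞) u → HasCompactSupport u →
      Continuous (fun p => rotv u p) ∧ HasCompactSupport (fun p => rotv u p) := by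
    intro u hu hus
    rw [rotv_eq_pd u (hu.differentiable (by simp))]
    exact ⟨((contDiff_pd (contDiff_comp hu 1) 0).continuous.sub
        (contDiff_pd (contDiff_comp hu 0) 1).continuous),
      (hcs_pd (hcs_comp hus 1) 0).comp₂_left (hcs_pd (hcs_comp hus 0) 1) (sub_zero 0)⟩
  obtain ⟨hAc, hAs⟩ := rot_reg v hvc hvs
  obtain ⟨hBc, hBs⟩ := rot_reg _ hwc hws
  have hintA : Integrable (fun p => (A p)^2) := integrable_sq hAc hAs
  have hintB : Integrable (fun p => (B p)^2) := integrable_sq hBc hBs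
  have hintAB : Integrable (fun p => (A p + B p)^2) := integrable_sq (hAc.add hBc) (hAs.add hBs)
  -- LHS computation
  have hγγh : (fun q => γ q - γh q) =
      fun q => c • ((gradF ω q - φ q) - (gradF ωh q - ρ q)) := by
    rw [hγ, hγh]
    funext q
    rw [smul_sub]
  have hdω : Differentiable ℝ (gradF ω) := (contDiff_gradF hω).differentiable (by simp)
  have hdωh : Differentiable ℝ (gradF ωh) := (contDiff_gradF hωh).differentiable (by simp)
  have hdφ : Differentiable ℝ φ := hφ.differentiable (by simp)
  have hdφh : Differentiable ℝ φh := hφh.differentiable (by simp)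
  have hdρ : Differentiable ℝ ρ := hρ.differentiable (by simp)
  have hU : Differentiable ℝ (fun q => (gradF ω q - φ q) - (gradF ωh q - ρ q)) :=
    ((hdω.sub hdφ).sub (hdωh.sub hdρ))
  have hrotpt : ∀ p, rotv (fun q => γ q - γh q) p = c * (-(A p + B p)) := by
    intro p
    rw [hγγh, rotv_smul hU c p,
      rotv_sub (u := fun q => gradF ω q - φ q) (w := fun q => gradF ωh q - ρ q) (hdω.sub hdφ) (hdωh.sub hdρ) p,
      rotv_sub hdω hdφ p, rotv_sub hdωh hdρ p,
      rotv_zero_gradF hω p, rotv_zero_gradF hωh p]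
    have hA' : A p = rotv φ p - rotv φh p := rotv_sub hdφ hdφh p
    have hB' : B p = rotv φh p - rotv ρ p := rotv_sub hdφh hdρ p
    rw [hA', hB']
    ring
  have hLHS : ∫ p, (rotv (fun q => γ q - γh q) p)^2 = c^2 * ∫ p, (A p + B p)^2 := by
    rw [← integral_const_mul]
    exact integral_congr_ae (by filter_upwards with p; rw [hrotpt p]; ring)
  -- pointwise structure of frobSq and trace
  set f0 : (Fin 2 → ℝ) → ℝ := fun q => v q 0 with hf0
  set f1 : (Fin 2 → ℝ) → ℝ := fun q => v q 1 with hf1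
  set a := pd 0 f0
  set b := pd 1 f1
  set cc := pd 1 f0
  set d := pd 0 f1
  have hdv := hvc.differentiable (by simp)
  have hfrob : ∀ p, frobSq (epsl v p) = a p^2 + b p^2 + (cc p + d p)^2/2 := by
    intro p
    simp only [frobSq, epsl, Fin.sum_univ_two, Matrix.smul_apply, Matrix.add_apply,
      Matrix.transpose_apply, jac_apply hdv, smul_eq_mul]
    show _ = a p^2 + b p^2 + (cc p + d p)^2/2
    ring
  have htr : ∀ p, Matrix.trace (epsl v p) = a p + b p := by
    intro p
    simp only [Matrix.trace, Matrix.diag, Fin.sum_univ_two, epsl, Matrix.smul_apply,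
      Matrix.add_apply, Matrix.transpose_apply, jac_apply hdv, smul_eq_mul]
    show _ = a p + b p
    ring
  have hintF : Integrable (fun p => frobSq (epsl v p)) := by
    have i1 : Integrable (fun p => a p^2 + b p^2 + (cc p + d p)^2/2) :=
      ((integrable_sq (contDiff_pd (contDiff_comp hvc 0) 0).continuous
          (hcs_pd (hcs_comp hvs 0) 0)).add
        (integrable_sq (contDiff_pd (contDiff_comp hvc 1) 1).continuous
          (hcs_pd (hcs_comp hvs 1) 1))).add
        ((integrable_sq ((contDiff_pd (contDiff_comp hvc 0) 1).continuous.add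
            (contDiff_pd (contDiff_comp hvc 1) 0).continuous)
          ((hcs_pd (hcs_comp hvs 0) 1).add (hcs_pd (hcs_comp hvs 1) 0))).div_const 2)
    exact i1.congr (by filter_upwards with p; rw [hfrob p])
  have hintT : Integrable (fun p => (Matrix.trace (epsl v p))^2) := by
    have i1 : Integrable (fun p => (a p + b p)^2) :=
      integrable_sq ((contDiff_pd (contDiff_comp hvc 0) 0).continuous.add
          (contDiff_pd (contDiff_comp hvc 1) 1).continuous)
        ((hcs_pd (hcs_comp hvs 0) 0).add (hcs_pd (hcs_comp hvs 1) 1))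
    exact i1.congr (by filter_upwards with p; rw [htr p])
  -- RHS splitting
  have hRHS : ∫ p, (2 * μ * frobSq (epsl v p) + lamt * (Matrix.trace (epsl v p))^2) =
      2 * μ * (∫ p, frobSq (epsl v p)) + lamt * ∫ p, (Matrix.trace (epsl v p))^2 := by
    rw [integral_add (hintF.const_mul (2*μ)) (hintT.const_mul lamt),
      integral_const_mul, integral_const_mul]
  -- inequalities
  have hkorn : ∫ p, (A p)^2 ≤ 2 * ∫ p, frobSq (epsl v p) := korn hvc hvs
  have hsum : ∫ p, (A p + B p)^2 ≤ 2 * (∫ p, (A p)^2) + 2 * ∫ p, (B p)^2 := by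
    rw [← integral_const_mul, ← integral_const_mul,
      ← integral_add (hintA.const_mul 2) (hintB.const_mul 2)]
    apply integral_mono hintAB ((hintA.const_mul 2).add (hintB.const_mul 2))
    intro p
    simp only [Pi.add_apply]
    nlinarith [sq_nonneg (A p - B p)]
  have hTnn : 0 ≤ ∫ p, (Matrix.trace (epsl v p))^2 := integral_nonneg fun p => sq_nonneg _
  have hc1 : (lam ^ 2)⁻¹ * t ^ 4 * c ^ 2 = 1 := by
    rw [hc]
    field_simp
  rw [hLHS, hRHS, ← mul_assoc, hc1, one_mul]
  have h1 : (2/μ) * (2 * μ * (∫ p, frobSq (epsl v p)) + lamt * ∫ p, (Matrix.trace (epsl v p))^2)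
      = 4 * (∫ p, frobSq (epsl v p)) + (2/μ) * lamt * ∫ p, (Matrix.trace (epsl v p))^2 := by
    field_simp
    ring
  rw [h1]
  have hpos : 0 ≤ (2/μ) * lamt * ∫ p, (Matrix.trace (epsl v p))^2 := by
    apply mul_nonneg (mul_nonneg (by positivity) hlamt) hTnn
  linarith
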